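/- In the network of Figure 1 (same equations and bounds), the unique maximizer of the linear objective v_1 + v_4 + v_5 + v_6 over the feasible set is (v_1,…,v_6) = (1.5, 0, 0, 3, 3, 3), attaining value 10.5; in particular v_3 = 0 at the optimum, so maximizing the sum of fluxes (LP-4) fails to certify the unblocked reaction v_3 in one iteration. -/

import Mathlib

/-! The steady-state equations leave two free fluxes, `v 2` and `v 3` (the paper's `v₃` and `v₄`):
every feasible `v` is `((v 2 + v 3)/2, 0, v 2, v 3, v 3, v 2 + v 3)`. On this family the objective
equals `3/2 · v 5 + 2 · v 3`, and both `v 5` and `v 3` are capped at `3`, so the maximum `10.5` is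
attained exactly when `v 5 = v 3 = 3`, which forces `v 2 = 0`. -/

def Feasible (v : Fin 6 → ℝ) : Prop :=
  2 * v 0 - v 1 - v 2 - v 3 = 0 ∧
  v 1 = 0 ∧
  v 3 - v 4 = 0 ∧
  v 2 + v 4 - v 5 = 0 ∧
  (∀ i : Fin 6, i ≠ 1 → 0 ≤ v i ∧ v i ≤ 3) ∧
  (-3 ≤ v 1 ∧ v 1 ≤ 3)

namespace Feasible

variable {v : Fin 6 → ℝ}

theorem le_three (hv : Feasible v) (i : Fin 6) (hi : i ≠ 1) : v i ≤ 3 :=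
  (hv.2.2.2.2.1 i hi).2

theorem eq_of_free_fluxes (hv : Feasible v) :
    v = ![(v 2 + v 3) / 2, 0, v 2, v 3, v 3, v 2 + v 3] := by
  obtain ⟨h₁, h₂, h₃, h₄, -, -⟩ := hv
  funext i
  fin_cases i <;>
    simp only [Fin.zero_eta, Fin.mk_one, Fin.reduceFinMk, Fin.isValue, Matrix.cons_val] <;> linarith

theorem objective_eq (hv : Feasible v) : v 0 + v 3 + v 4 + v 5 = 3 / 2 * v 5 + 2 * v 3 := by
  obtain ⟨h₁, h₂, h₃, h₄, -, -⟩ := hv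
  linarith

theorem objective_le (hv : Feasible v) : v 0 + v 3 + v 4 + v 5 ≤ 10.5 := by
  linarith [hv.objective_eq, hv.le_three 3 (by decide), hv.le_three 5 (by decide)]

theorem eq_optimum_of_objective_eq (hv : Feasible v) (hopt : v 0 + v 3 + v 4 + v 5 = 10.5) :
    v = ![1.5, 0, 0, 3, 3, 3] := by
  have h₃ := hv.le_three 3 (by decide)
  have h₅ := hv.le_three 5 (by decide)
  have hv3 : v 3 = 3 := by linarith [hv.objective_eq]
  have hv2 : v 2 = 0 := by linarith [hv.objective_eq, hv.2.2.1, hv.2.2.2.1]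
  rw [hv.eq_of_free_fluxes, hv2, hv3]
  norm_num

end Feasible

theorem feasible_optimum : Feasible ![1.5, 0, 0, 3, 3, 3] := by
  refine ⟨?_, rfl, ?_, ?_, fun i _ => by fin_cases i <;> norm_num, by norm_num⟩ <;>
    simp only [Matrix.cons_val] <;> norm_num

theorem stmt_12 :
    Feasible ![1.5, 0, 0, 3, 3, 3] ∧
    (![1.5, 0, 0, 3, 3, 3] : Fin 6 → ℝ) 0 + (![1.5, 0, 0, 3, 3, 3] : Fin 6 → ℝ) 3 +
      (![1.5, 0, 0, 3, 3, 3] : Fin 6 → ℝ) 4 + (![1.5, 0, 0, 3, 3, 3] : Fin 6 → ℝ) 5 = 10.5 ∧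
    (∀ v : Fin 6 → ℝ, Feasible v →
      v 0 + v 3 + v 4 + v 5 ≤ 10.5 ∧
      (v 0 + v 3 + v 4 + v 5 = 10.5 → v = ![1.5, 0, 0, 3, 3, 3])) :=
  ⟨feasible_optimum, by simp only [Matrix.cons_val]; norm_num,
    fun _ hv => ⟨hv.objective_le, hv.eq_optimum_of_objective_eq⟩⟩
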